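/- arXiv:2402.06857 — 5 statements merged into one kernel-verified Lean document; each statement's English description precedes it below -/
import Mathlib

section
/- Let a, b, c be real numbers with a > 0, b > 0 and ab − c² > 0. Then the 4×4 real matrix A = (1/(4(ab − c²))) · [[2b, −c, 0, −c], [−c, 2a, −c, 0], [0, −c, 2b, −c], [−c, 0, −c, 2a]] is symmetric positive definite. -/
/-- The local velocity mass matrix of the symmetric MFMFE method at an interior vertex,
for a constant SPD permeability tensor `K = [[a, c], [c, b]]`, is symmetric positive
definite. -/
theorem local_mass_matrix_posDef (a b c : ℝ) (ha : 0 < a) (hb : 0 < b)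
    (hdet : 0 < a * b - c ^ 2) :
    let A : Matrix (Fin 4) (Fin 4) ℝ :=
      (1 / (4 * (a * b - c ^ 2))) •
        !![2 * b, -c, 0, -c;
           -c, 2 * a, -c, 0;
           0, -c, 2 * b, -c;
           -c, 0, -c, 2 * a]
    A.IsSymm ∧ A.PosDef := by
  intro A
  have hsymm : A.IsSymm := by
    unfold Matrix.IsSymm
    ext i j
    fin_cases i <;> fin_cases j <;>
      simp [A, Matrix.transpose_apply]
  refine ⟨hsymm, ?_, ?_⟩
  · rw [Matrix.IsHermitian]
    ext i j
    fin_cases i <;> fin_cases j <;>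
      simp [A, Matrix.conjTranspose_apply]
  · intro x hx
    have hx0 : x 0 ≠ 0 ∨ x 1 ≠ 0 ∨ x 2 ≠ 0 ∨ x 3 ≠ 0 := by
      by_contra h
      push_neg at h
      apply hx
      ext i
      fin_cases i <;> simp [h.1, h.2.1, h.2.2.1, h.2.2.2]
    simp only [Finsupp.sum_fintype, star_zero, zero_mul, mul_zero, add_zero,
      Finset.sum_const_zero, implies_true,
      Matrix.mulVec, dotProduct, Fin.sum_univ_four,
      Matrix.smul_apply, Matrix.cons_val_zero, Matrix.cons_val_one,
      Matrix.head_cons, Matrix.cons_val_succ, star_trivial,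
      Matrix.cons_val_two, Matrix.cons_val_three, Matrix.tail_cons,
      Matrix.head_fin_const, Matrix.cons_val_fin_one,
      Matrix.of_apply, A, RCLike.re_to_real, smul_eq_mul]
    have hb' : (0:ℝ) < b := hb
    have key : ∀ u v : ℝ, 0 ≤ b * u ^ 2 - 2 * c * u * v + a * v ^ 2 := by
      intro u v
      have h1 : 0 ≤ (b * u - c * v) ^ 2 := sq_nonneg _
      have h2 : 0 ≤ (a * b - c ^ 2) * v ^ 2 := by positivity
      nlinarith
    have keypos : ∀ u v : ℝ, u ≠ 0 → 0 < b * u ^ 2 - 2 * c * u * v + a * v ^ 2 := by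
      intro u v hu
      rcases eq_or_ne v 0 with rfl | hv
      · have : 0 < u ^ 2 := by positivity
        nlinarith
      · have h2 : 0 < (a * b - c ^ 2) * v ^ 2 := by positivity
        nlinarith [sq_nonneg (b * u - c * v)]
    have keypos' : ∀ u v : ℝ, v ≠ 0 → 0 < b * u ^ 2 - 2 * c * u * v + a * v ^ 2 := by
      intro u v hv
      have h2 : 0 < (a * b - c ^ 2) * v ^ 2 := by positivity
      nlinarith [sq_nonneg (b * u - c * v)]
    have hD : (0:ℝ) < 1 / (4 * (a * b - c ^ 2)) := by positivity
    have hq : 0 < (b * (x 0) ^ 2 - 2 * c * (x 0) * (x 1) + a * (x 1) ^ 2)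
        + (b * (x 2) ^ 2 - 2 * c * (x 2) * (x 1) + a * (x 1) ^ 2)
        + (b * (x 2) ^ 2 - 2 * c * (x 2) * (x 3) + a * (x 3) ^ 2)
        + (b * (x 0) ^ 2 - 2 * c * (x 0) * (x 3) + a * (x 3) ^ 2) := by
      rcases hx0 with h | h | h | h
      · have := keypos (x 0) (x 1) h
        nlinarith [key (x 2) (x 1), key (x 2) (x 3), key (x 0) (x 3)]
      · have := keypos' (x 0) (x 1) h
        nlinarith [key (x 2) (x 1), key (x 2) (x 3), key (x 0) (x 3)]
      · have := keypos (x 2) (x 1) h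
        nlinarith [key (x 0) (x 1), key (x 2) (x 3), key (x 0) (x 3)]
      · have := keypos' (x 2) (x 3) h
        nlinarith [key (x 0) (x 1), key (x 2) (x 1), key (x 0) (x 3)]
    have := mul_pos hD hq
    calc (0:ℝ) < 1 / (4 * (a * b - c ^ 2)) *
        ((b * (x 0) ^ 2 - 2 * c * (x 0) * (x 1) + a * (x 1) ^ 2)
        + (b * (x 2) ^ 2 - 2 * c * (x 2) * (x 1) + a * (x 1) ^ 2)
        + (b * (x 2) ^ 2 - 2 * c * (x 2) * (x 3) + a * (x 3) ^ 2)
        + (b * (x 0) ^ 2 - 2 * c * (x 0) * (x 3) + a * (x 3) ^ 2)) := this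
      _ = _ := by ring
end

section
/- Let a, b, c be real numbers with a ≠ 0, b ≠ 0 and ab − c² ≠ 0. Let A = (1/(4(ab − c²))) · [[2b, −c, 0, −c], [−c, 2a, −c, 0], [0, −c, 2b, −c], [−c, 0, −c, 2a]] and let M be the 4×4 matrix M = [[a − c²/(2b), c/2, c²/(2b), c/2], [c/2, b − c²/(2a), c/2, c²/(2a)], [c²/(2b), c/2, a − c²/(2b), c/2], [c/2, c²/(2a), c/2, b − c²/(2a)]]. Then A · (2M) = I₄; in particular A is invertible with A⁻¹ = 2M. -/
set_option maxHeartbeats 1000000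


/-- Explicit inverse of the local velocity mass matrix: `A * (2M) = 1`, so `A` is
invertible with `A⁻¹ = 2M`. -/
theorem local_mass_matrix_inverse (a b c : ℝ) (ha : a ≠ 0) (hb : b ≠ 0)
    (hdet : a * b - c ^ 2 ≠ 0) :
    let A : Matrix (Fin 4) (Fin 4) ℝ :=
      (1 / (4 * (a * b - c ^ 2))) •
        !![2 * b, -c, 0, -c;
           -c, 2 * a, -c, 0;
           0, -c, 2 * b, -c;
           -c, 0, -c, 2 * a]
    let M : Matrix (Fin 4) (Fin 4) ℝ :=
      !![a - c ^ 2 / (2 * b), c / 2, c ^ 2 / (2 * b), c / 2;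
         c / 2, b - c ^ 2 / (2 * a), c / 2, c ^ 2 / (2 * a);
         c ^ 2 / (2 * b), c / 2, a - c ^ 2 / (2 * b), c / 2;
         c / 2, c ^ 2 / (2 * a), c / 2, b - c ^ 2 / (2 * a)]
    A * (2 • M) = 1 ∧ IsUnit A ∧ A⁻¹ = 2 • M := by
  intro A M
  have h : A * (2 • M) = 1 := by
    show (1 / (4 * (a * b - c ^ 2))) •
        !![2 * b, -c, 0, -c;
           -c, 2 * a, -c, 0;
           0, -c, 2 * b, -c;
           -c, 0, -c, 2 * a] *
        (2 • !![a - c ^ 2 / (2 * b), c / 2, c ^ 2 / (2 * b), c / 2;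
         c / 2, b - c ^ 2 / (2 * a), c / 2, c ^ 2 / (2 * a);
         c ^ 2 / (2 * b), c / 2, a - c ^ 2 / (2 * b), c / 2;
         c / 2, c ^ 2 / (2 * a), c / 2, b - c ^ 2 / (2 * a)]) = 1
    ext i j
    fin_cases i <;> fin_cases j <;>
      simp [Matrix.mul_apply, Fin.sum_univ_four, Matrix.one_apply] <;>
      field_simp <;> ring
  have hu : IsUnit A := (Matrix.isUnit_iff_isUnit_det A).mpr (Matrix.isUnit_det_of_right_inverse h)
  exact ⟨h, hu, Matrix.inv_eq_right_inv h⟩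
end

section
/- Let a, b, c be real numbers with a ≠ 0, b ≠ 0, and define m₁ = 2a + 2b − c²(1/a + 1/b), m₂ = −(c/2)(1 + c/(2a) + c/(2b)), m₃ = −b + (c²/2)(1/a + 1/b), m₄ = (c/2)(1 − c/(2a) − c/(2b)), m₅ = −a + (c²/2)(1/a + 1/b). Then for all θ₁, θ₂ ∈ ℝ, the symbol L̃(θ) = m₁ + 2m₂cos(θ₁ + θ₂) + 2m₃cos(θ₂) + 2m₄cos(θ₁ − θ₂) + 2m₅cos(θ₁) admits the closed form L̃(θ) = 2a(1 − cos θ₁) + 2b(1 − cos θ₂) + 2c sin θ₁ sin θ₂ − c²(1/a + 1/b)(1 − cos θ₁)(1 − cos θ₂). -/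
/-- Closed form of the LFA symbol of the 9-point MFMFE pressure stencil:
`L̃(θ) = 2a(1−cosθ₁) + 2b(1−cosθ₂) + 2c sinθ₁ sinθ₂ − c²(1/a+1/b)(1−cosθ₁)(1−cosθ₂)`. -/
theorem stencil_symbol_closed_form (a b c : ℝ) (ha : a ≠ 0) (hb : b ≠ 0)
    (θ₁ θ₂ : ℝ) :
    let m₁ : ℝ := 2 * a + 2 * b - c ^ 2 * (1 / a + 1 / b)
    let m₂ : ℝ := -(c / 2) * (1 + c / (2 * a) + c / (2 * b))
    let m₃ : ℝ := -b + (c ^ 2 / 2) * (1 / a + 1 / b)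
    let m₄ : ℝ := (c / 2) * (1 - c / (2 * a) - c / (2 * b))
    let m₅ : ℝ := -a + (c ^ 2 / 2) * (1 / a + 1 / b)
    m₁ + 2 * m₂ * Real.cos (θ₁ + θ₂) + 2 * m₃ * Real.cos θ₂ +
        2 * m₄ * Real.cos (θ₁ - θ₂) + 2 * m₅ * Real.cos θ₁
      = 2 * a * (1 - Real.cos θ₁) + 2 * b * (1 - Real.cos θ₂) +
        2 * c * Real.sin θ₁ * Real.sin θ₂ -
        c ^ 2 * (1 / a + 1 / b) * (1 - Real.cos θ₁) * (1 - Real.cos θ₂) := by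
  simp only [Real.cos_add, Real.cos_sub]
  field_simp
  ring
end

section
/- Let a, b, c be real numbers with a > 0, b > 0 and ab − c² > 0. Then for all θ = (θ₁, θ₂) ∈ ℝ², the symbol L̃(θ) = 2a(1 − cos θ₁) + 2b(1 − cos θ₂) + 2c sin θ₁ sin θ₂ − c²(1/a + 1/b)(1 − cos θ₁)(1 − cos θ₂) satisfies L̃(θ) ≥ 0, and L̃(θ) = 0 if and only if both θ₁ and θ₂ are integer multiples of 2π. -/
set_option maxHeartbeats 2000000 in
/-- Nonnegativity of the LFA symbol of the 9-point MFMFE pressure stencil for an SPD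
tensor, with equality exactly at integer multiples of `2π` in both frequencies. -/
theorem stencil_symbol_nonneg (a b c : ℝ) (ha : 0 < a) (hb : 0 < b)
    (hdet : 0 < a * b - c ^ 2) (θ₁ θ₂ : ℝ) :
    let Lsymb : ℝ := 2 * a * (1 - Real.cos θ₁) + 2 * b * (1 - Real.cos θ₂) +
      2 * c * Real.sin θ₁ * Real.sin θ₂ -
      c ^ 2 * (1 / a + 1 / b) * (1 - Real.cos θ₁) * (1 - Real.cos θ₂)
    0 ≤ Lsymb ∧
      (Lsymb = 0 ↔ (∃ k : ℤ, θ₁ = 2 * Real.pi * k) ∧ (∃ l : ℤ, θ₂ = 2 * Real.pi * l)) := by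
  intro Lsymb
  set p := Real.sin (θ₁ / 2) with hp
  set q := Real.sin (θ₂ / 2) with hq
  set C1 := Real.cos (θ₁ / 2) with hC1
  set C2 := Real.cos (θ₂ / 2) with hC2
  have h1 : p ^ 2 + C1 ^ 2 = 1 := Real.sin_sq_add_cos_sq _
  have h2 : q ^ 2 + C2 ^ 2 = 1 := Real.sin_sq_add_cos_sq _
  have ht1 : θ₁ = 2 * (θ₁ / 2) := by ring
  have ht2 : θ₂ = 2 * (θ₂ / 2) := by ring
  have hc1 : Real.cos θ₁ = 1 - 2 * p ^ 2 := by
    rw [ht1, Real.cos_two_mul, ← hC1]; linarith [h1]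
  have hc2 : Real.cos θ₂ = 1 - 2 * q ^ 2 := by
    rw [ht2, Real.cos_two_mul, ← hC2]; linarith [h2]
  have hs1 : Real.sin θ₁ = 2 * p * C1 := by
    rw [ht1, Real.sin_two_mul]
  have hs2 : Real.sin θ₂ = 2 * q * C2 := by
    rw [ht2, Real.sin_two_mul]
  have hL : Lsymb = 4 * a * p ^ 2 + 4 * b * q ^ 2 + 8 * c * (p * q * C1 * C2) -
      4 * (c ^ 2 * (1 / a + 1 / b)) * (p ^ 2 * q ^ 2) := by
    simp only [Lsymb, hc1, hc2, hs1, hs2]; ring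
  clear_value Lsymb p q C1 C2
  have habL : a * b * Lsymb = 4 * (a ^ 2 * b * p ^ 2 + a * b ^ 2 * q ^ 2 +
      2 * a * b * c * (p * q * C1 * C2) - c ^ 2 * (a + b) * (p ^ 2 * q ^ 2)) := by
    rw [hL]; field_simp; ring
  set G : ℝ := a ^ 2 * b * p ^ 2 + a * b ^ 2 * q ^ 2 +
      2 * a * b * c * (p * q * C1 * C2) - c ^ 2 * (a + b) * (p ^ 2 * q ^ 2) with hG
  have hp2 : p ^ 2 ≤ 1 := by nlinarith [sq_nonneg C1]
  have hq2 : q ^ 2 ≤ 1 := by nlinarith [sq_nonneg C2]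
  have hpos : 0 < a * b - c ^ 2 * p ^ 2 := by
    nlinarith [mul_nonneg (sq_nonneg c) (sub_nonneg.mpr hp2)]
  have hpq1 : p ^ 2 * q ^ 2 ≤ 1 := by nlinarith [sq_nonneg p, sq_nonneg q]
  have hpos2 : 0 < a * b - c ^ 2 * (p ^ 2 * q ^ 2) := by
    nlinarith [mul_nonneg (sq_nonneg c) (sub_nonneg.mpr hpq1)]
  have hS := sq_nonneg ((a * b - c ^ 2 * p ^ 2) * q + a * c * C1 * C2 * p)
  have hkey : (a * b - c ^ 2 * p ^ 2) * G =
      b * ((a * b - c ^ 2 * p ^ 2) * q + a * c * C1 * C2 * p) ^ 2 +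
      a * ((a * b - c ^ 2) * ((a * b - c ^ 2 * (p ^ 2 * q ^ 2)) * p ^ 2)) := by
    have e1 : C1 ^ 2 = 1 - p ^ 2 := by linarith
    have e2 : C2 ^ 2 = 1 - q ^ 2 := by linarith
    rw [hG]
    linear_combination (-(a ^ 2 * b * c ^ 2 * p ^ 2 * C2 ^ 2)) * e1 +
      (-(a ^ 2 * b * c ^ 2 * p ^ 2 * (1 - p ^ 2))) * e2
  have hRHS : 0 ≤ b * ((a * b - c ^ 2 * p ^ 2) * q + a * c * C1 * C2 * p) ^ 2 +
      a * ((a * b - c ^ 2) * ((a * b - c ^ 2 * (p ^ 2 * q ^ 2)) * p ^ 2)) :=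
    add_nonneg (mul_nonneg hb.le hS)
      (mul_nonneg ha.le (mul_nonneg hdet.le (mul_nonneg hpos2.le (sq_nonneg p))))
  have hmul : 0 ≤ (a * b - c ^ 2 * p ^ 2) * G := hkey ▸ hRHS
  have hGnn : 0 ≤ G := by
    nlinarith [hmul, hpos]
  have hLnn : 0 ≤ Lsymb := by
    nlinarith [mul_pos ha hb, hGnn, habL]
  refine ⟨hLnn, ?_, ?_⟩
  · intro h0
    have hG0 : G = 0 := by
      have h4 : a * b * Lsymb = 0 := by rw [h0]; ring
      have := habL ▸ h4
      linarith
    have hk0 : 0 = b * ((a * b - c ^ 2 * p ^ 2) * q + a * c * C1 * C2 * p) ^ 2 +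
        a * ((a * b - c ^ 2) * ((a * b - c ^ 2 * (p ^ 2 * q ^ 2)) * p ^ 2)) := by
      rw [← hkey, hG0]; ring
    have hps : p ^ 2 ≤ 0 := by
      nlinarith [hk0, mul_nonneg hb.le hS, mul_pos (mul_pos ha hdet) hpos2, sq_nonneg p]
    have hp0 : p = 0 := by
      have := le_antisymm hps (sq_nonneg p)
      exact pow_eq_zero_iff (by norm_num) |>.mp this
    have hq0 : q = 0 := by
      have hGq : 0 = a * b ^ 2 * q ^ 2 := by rw [← hG0, hG, hp0]; ring
      have : q ^ 2 = 0 := by nlinarith [mul_pos ha (mul_pos hb hb)]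
      exact pow_eq_zero_iff (by norm_num) |>.mp this
    constructor
    · have : Real.cos θ₁ = 1 := by rw [hc1, hp0]; ring
      obtain ⟨n, hn⟩ := (Real.cos_eq_one_iff θ₁).mp this
      exact ⟨n, by linarith⟩
    · have : Real.cos θ₂ = 1 := by rw [hc2, hq0]; ring
      obtain ⟨n, hn⟩ := (Real.cos_eq_one_iff θ₂).mp this
      exact ⟨n, by linarith⟩
  · rintro ⟨⟨k, hk⟩, ⟨l, hl⟩⟩
    have hp0 : p = 0 := by
      rw [hp]; rw [show θ₁ / 2 = (k : ℝ) * Real.pi by rw [hk]; ring]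
      exact Real.sin_int_mul_pi k
    have hq0 : q = 0 := by
      rw [hq]; rw [show θ₂ / 2 = (l : ℝ) * Real.pi by rw [hl]; ring]
      exact Real.sin_int_mul_pi l
    rw [hL, hp0, hq0]; ring
end

section
/- Let r₁, r₂, r₃, r₄ ∈ ℝ² and let F(x̂, ŷ) = r₁ + (r₂ − r₁)x̂ + (r₄ − r₁)ŷ + ((r₃ − r₄) − (r₂ − r₁))x̂ŷ be the bilinear map of the unit square, with Jacobian matrix DF(x̂, ŷ). Then the function J(x̂, ŷ) = det DF(x̂, ŷ) is affine in (x̂, ŷ) (it has the form d₀ + d₁x̂ + d₂ŷ with no x̂ŷ term); consequently, if J > 0 at the four corners (0,0), (1,0), (1,1), (0,1) of the unit square, then J(x̂, ŷ) > 0 for all (x̂, ŷ) ∈ [0,1]². -/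
open Matrix

/-- The Jacobian determinant of the bilinear reference map of a quadrilateral is an
affine function of `(x̂, ŷ)`; hence, if it is positive at the four corners of the unit
square, it is positive on the whole unit square. -/
theorem bilinear_jacobian_affine (r₁ r₂ r₃ r₄ : Fin 2 → ℝ) :
    let DF : ℝ → ℝ → Matrix (Fin 2) (Fin 2) ℝ := fun x y =>
      Matrix.of fun i => ![(r₂ i - r₁ i) + ((r₃ i - r₄ i) - (r₂ i - r₁ i)) * y,
                           (r₄ i - r₁ i) + ((r₃ i - r₄ i) - (r₂ i - r₁ i)) * x]
    let J : ℝ → ℝ → ℝ := fun x y => (DF x y).det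
    (∃ d₀ d₁ d₂ : ℝ, ∀ x y : ℝ, J x y = d₀ + d₁ * x + d₂ * y) ∧
      ((0 < J 0 0 → 0 < J 1 0 → 0 < J 1 1 → 0 < J 0 1 →
        ∀ x ∈ Set.Icc (0:ℝ) 1, ∀ y ∈ Set.Icc (0:ℝ) 1, 0 < J x y)) := by
  intro DF J
  set a0 := r₂ 0 - r₁ 0 with ha0
  set a1 := r₂ 1 - r₁ 1 with ha1
  set b0 := r₄ 0 - r₁ 0 with hb0
  set b1 := r₄ 1 - r₁ 1 with hb1
  set c0 := (r₃ 0 - r₄ 0) - (r₂ 0 - r₁ 0) with hc0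
  set c1 := (r₃ 1 - r₄ 1) - (r₂ 1 - r₁ 1) with hc1
  have hJ : ∀ x y : ℝ, J x y =
      (a0 * b1 - b0 * a1) + (a0 * c1 - a1 * c0) * x + (b1 * c0 - b0 * c1) * y := by
    intro x y
    simp only [J, DF, Matrix.det_fin_two, Matrix.of_apply, Matrix.cons_val',
      Matrix.cons_val_zero, Matrix.cons_val_one, Matrix.head_cons, Matrix.empty_val',
      Matrix.cons_val_fin_one]
    ring
  constructor
  · exact ⟨_, _, _, hJ⟩
  · intro h00 h10 h11 h01 x hx y hy
    rw [hJ] at h00 h10 h11 h01 ⊢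
    obtain ⟨hx0, hx1⟩ := hx
    obtain ⟨hy0, hy1⟩ := hy
    set A := a0 * b1 - b0 * a1 + (a0 * c1 - a1 * c0) * 0 + (b1 * c0 - b0 * c1) * 0 with hA
    set B := a0 * b1 - b0 * a1 + (a0 * c1 - a1 * c0) * 1 + (b1 * c0 - b0 * c1) * 0 with hB
    set C := a0 * b1 - b0 * a1 + (a0 * c1 - a1 * c0) * 1 + (b1 * c0 - b0 * c1) * 1 with hC
    set D := a0 * b1 - b0 * a1 + (a0 * c1 - a1 * c0) * 0 + (b1 * c0 - b0 * c1) * 1 with hD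
    set m := min (min A B) (min C D) with hm
    have hmpos : 0 < m := lt_min (lt_min h00 h10) (lt_min h11 h01)
    have hmA : m ≤ A := le_trans (min_le_left _ _) (min_le_left _ _)
    have hmB : m ≤ B := le_trans (min_le_left _ _) (min_le_right _ _)
    have hmC : m ≤ C := le_trans (min_le_right _ _) (min_le_left _ _)
    have hmD : m ≤ D := le_trans (min_le_right _ _) (min_le_right _ _)
    have key : a0 * b1 - b0 * a1 + (a0 * c1 - a1 * c0) * x + (b1 * c0 - b0 * c1) * y =
        (1 - x) * (1 - y) * A + x * (1 - y) * B + x * y * C + (1 - x) * y * D := by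
      rw [hA, hB, hC, hD]; ring
    rw [key]
    nlinarith [mul_nonneg (mul_nonneg hx0 hy0) (sub_nonneg.2 hmC),
      mul_nonneg (mul_nonneg hx0 (sub_nonneg.2 hy1)) (sub_nonneg.2 hmB),
      mul_nonneg (mul_nonneg (sub_nonneg.2 hx1) hy0) (sub_nonneg.2 hmD),
      mul_nonneg (mul_nonneg (sub_nonneg.2 hx1) (sub_nonneg.2 hy1)) (sub_nonneg.2 hmA)]
end
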